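/- Let (T,d) be a compact metric space, m a Borel probability measure on T, φ a Young function with φ(1)=1, and R > 2. Then for all integers 0 ≤ c < l and every x ∈ T: Σ_{k=c}^{l-1} r^l_k(x) R^k ≤ (R²/((R−1)(R−2))) ∫_0^{r_c(x)} φ^{-1}(1/m(B(x,ε))) dε, where φ^{-1} is the generalized inverse of φ and the conventions 1/0 := ∞, φ^{-1}(∞) := ∞ are used. -/

import Mathlib

open MeasureTheory ENNReal Filter

noncomputable section

/-- A (finite) Young function: an increasing convex function `φ : [0,∞) → [0,∞)`
with `φ 0 = 0` and `φ x → ∞` as `x → ∞`. -/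
def IsYoungFunction (φ : ℝ → ℝ) : Prop :=
  MonotoneOn φ (Set.Ici 0) ∧ ConvexOn ℝ (Set.Ici 0) φ ∧ φ 0 = 0 ∧
    Tendsto φ atTop atTop

/-- Generalized inverse of a Young function, as a map `ℝ≥0∞ → ℝ≥0∞`
(so that in particular `φ⁻¹(∞) = ∞`). -/
def yinv (φ : ℝ → ℝ) (y : ℝ≥0∞) : ℝ≥0∞ :=
  sInf {x : ℝ≥0∞ | ∃ r : ℝ, 0 ≤ r ∧ x = ENNReal.ofReal r ∧ y ≤ ENNReal.ofReal (φ r)}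

/-- The minorizing metric
`τ_{m,φ}(s,t) = max_{x ∈ {s,t}} ∫_0^{d(s,t)} φ⁻¹(1 / m(B(x,ε))) dε`,
with the conventions `1/0 = ∞`, `φ⁻¹(∞) = ∞`. -/
def tauDist {T : Type*} [MetricSpace T] [MeasurableSpace T]
    (m : Measure T) (φ : ℝ → ℝ) (s t : T) : ℝ≥0∞ :=
  max (∫⁻ ε in Set.Ioc (0 : ℝ) (dist s t), yinv φ (1 / m (Metric.closedBall s ε)))
    (∫⁻ ε in Set.Ioc (0 : ℝ) (dist s t), yinv φ (1 / m (Metric.closedBall t ε)))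

/-- `f^d(u,v) = |f(u) - f(v)| / d(u,v)`, equal to `0` on the diagonal. -/
def fdiv {T : Type*} [MetricSpace T] (f : T → ℝ) (p : T × T) : ℝ :=
  |f p.1 - f p.2| / dist p.1 p.2

/-- The Luxemburg norm `|g|^ν_χ = inf {a > 0 : ∫ χ(|g|/a) dν ≤ 1}`, with value `∞`
if no such `a` exists. -/
def luxNorm {X : Type*} [MeasurableSpace X] (ν : Measure X) (χ : ℝ → ℝ)
    (g : X → ℝ) : ℝ≥0∞ :=
  sInf {a : ℝ≥0∞ | ∃ b : ℝ, 0 < b ∧ a = ENNReal.ofReal b ∧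
    ∫⁻ u, ENNReal.ofReal (χ (|g u| / b)) ∂ν ≤ 1}

/-- The Amemiya norm `‖g‖^μ_χ = inf_{a>0} a (1 + ∫ χ(|g|/a) dμ)`. -/
def amemiyaNorm {X : Type*} [MeasurableSpace X] (μ : Measure X) (χ : ℝ → ℝ)
    (g : X → ℝ) : ℝ≥0∞ :=
  sInf {c : ℝ≥0∞ | ∃ a : ℝ, 0 < a ∧
    c = ENNReal.ofReal a * (1 + ∫⁻ u, ENNReal.ofReal (χ (|g u| / a)) ∂μ)}

/-- `r_0(x) = D(T)` and, for `k ≥ 1`,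
`r_k(x) = min {ε ≥ 0 : 1 / m(B(x,ε)) ≤ φ(R^k)}` (with `1/0 = ∞`). -/
def rad {T : Type*} [MetricSpace T] [MeasurableSpace T]
    (m : Measure T) (φ : ℝ → ℝ) (R : ℝ) : ℕ → T → ℝ
  | 0, _ => Metric.diam (Set.univ : Set T)
  | k + 1, x => sInf {ε : ℝ | 0 ≤ ε ∧
      1 / m (Metric.closedBall x ε) ≤ ENNReal.ofReal (φ (R ^ (k + 1)))}

/-- `r^l_k(x) = ∑_{i=k}^{l} 2^(i-k) r_i(x)`. -/
def radl {T : Type*} [MetricSpace T] [MeasurableSpace T]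
    (m : Measure T) (φ : ℝ → ℝ) (R : ℝ) (k l : ℕ) (x : T) : ℝ :=
  ∑ i ∈ Finset.Icc k l, (2 : ℝ) ^ (i - k) * rad m φ R i x

/-- The averaging operator `S_k f (x) = (1 / m(B_k(x))) ∫_{B_k(x)} f dm`,
with the convention `0/0 = 0`. -/
def avg {T : Type*} [MetricSpace T] [MeasurableSpace T]
    (m : Measure T) (φ : ℝ → ℝ) (R : ℝ) (k : ℕ) (f : T → ℝ) (x : T) : ℝ :=
  (∫ u in Metric.closedBall x (rad m φ R k x), f u ∂m) /
    (m (Metric.closedBall x (rad m φ R k x))).toReal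

/-- The iterated averaging operator `iterAvg k l f = S_l S_{l-1} ⋯ S_k f` (for `k ≤ l`). -/
def iterAvg {T : Type*} [MetricSpace T] [MeasurableSpace T]
    (m : Measure T) (φ : ℝ → ℝ) (R : ℝ) (k : ℕ) : ℕ → (T → ℝ) → T → ℝ
  | 0, f => avg m φ R 0 f
  | l + 1, f =>
      if l + 1 ≤ k then avg m φ R (l + 1) f
      else avg m φ R (l + 1) (iterAvg m φ R k l f)

/-- The set `{k ≥ 1 : B^l_k(s) ∪ B^l_k(t) ⊆ B°(u, r_{k-1}(u)) for every u ∈ B^l_k(x)}`,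
whose greatest element is `τ_x`. -/
def tauSet {T : Type*} [MetricSpace T] [MeasurableSpace T]
    (m : Measure T) (φ : ℝ → ℝ) (R : ℝ) (l : ℕ) (s t x : T) : Set ℕ :=
  {k : ℕ | 1 ≤ k ∧ ∀ u ∈ Metric.closedBall x (radl m φ R k l x),
    Metric.closedBall s (radl m φ R k l s) ∪ Metric.closedBall t (radl m φ R k l t) ⊆
      Metric.ball u (rad m φ R (k - 1) u)}

/-! The radii `r_k(x)` decrease in `k`, and on `(0, r_k(x))` the integrand `φ⁻¹(1/m(B(x,ε)))` is
at least `R^k`. Cutting `(0, r_c(x)]` at the points `r_{c+1}(x) ≥ ⋯ ≥ r_l(x)` therefore bounds the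
integral below by `B = R^l r_l + ∑_{c ≤ j < l} R^j (r_j - r_{j+1})`. By Abel summation
`R B ≥ (R - 1) ∑_{c ≤ i ≤ l} R^i r_i`, while the dyadic tails `r^l_k = r_k + 2 r^l_{k+1}` satisfy
`∑_{c ≤ k ≤ l} r^l_k R^k ≤ R/(R-2) ∑_{c ≤ i ≤ l} R^i r_i`, a geometric series in `2/R`. -/

def dyadicTailSum (r : ℕ → ℝ) (k l : ℕ) : ℝ := ∑ i ∈ Finset.Icc k l, (2 : ℝ) ^ (i - k) * r i

lemma sum_Icc_eq_add_sum_Icc_succ (f : ℕ → ℝ) {c l : ℕ} (hcl : c ≤ l) :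
    ∑ i ∈ Finset.Icc c l, f i = f c + ∑ i ∈ Finset.Icc (c + 1) l, f i := by
  rw [← Finset.add_sum_Ioc_eq_sum_Icc hcl, Finset.Icc_add_one_left_eq_Ioc]

lemma dyadicTailSum_nonneg {r : ℕ → ℝ} (hr : ∀ i, 0 ≤ r i) (k l : ℕ) :
    0 ≤ dyadicTailSum r k l :=
  Finset.sum_nonneg fun i _ => mul_nonneg (by positivity) (hr i)

lemma dyadicTailSum_eq_add (r : ℕ → ℝ) {c l : ℕ} (hcl : c ≤ l) :
    dyadicTailSum r c l = r c + 2 * dyadicTailSum r (c + 1) l := by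
  rw [dyadicTailSum, sum_Icc_eq_add_sum_Icc_succ _ hcl, dyadicTailSum, Finset.mul_sum,
    Nat.sub_self, pow_zero, one_mul]
  refine congrArg _ (Finset.sum_congr rfl fun i hi => ?_)
  rw [show i - c = i - (c + 1) + 1 by grind, pow_succ]
  ring

lemma sum_dyadicTailSum_mul_pow_eq (R : ℝ) (r : ℕ → ℝ) {c l : ℕ} (hcl : c ≤ l) :
    (R - 2) * ∑ k ∈ Finset.Icc c l, dyadicTailSum r k l * R ^ k + 2 * R ^ c * dyadicTailSum r c l =
      R * ∑ i ∈ Finset.Icc c l, R ^ i * r i := by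
  induction hcl using Nat.decreasingInduction with
  | self =>
    simp only [dyadicTailSum, Finset.Icc_self, Finset.sum_singleton, tsub_self, pow_zero, one_mul]
    ring
  | of_succ c hcl ih =>
    rw [sum_Icc_eq_add_sum_Icc_succ _ hcl.le, sum_Icc_eq_add_sum_Icc_succ _ hcl.le,
      dyadicTailSum_eq_add r hcl.le]
    linear_combination ih

lemma sum_dyadicTailSum_mul_pow_le {R : ℝ} (hR : 2 < R) {r : ℕ → ℝ} (hr : ∀ i, 0 ≤ r i)
    {c l : ℕ} (hcl : c ≤ l) :
    ∑ k ∈ Finset.Icc c l, dyadicTailSum r k l * R ^ k ≤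
      R / (R - 2) * ∑ i ∈ Finset.Icc c l, R ^ i * r i := by
  have hrem : 0 ≤ 2 * R ^ c * dyadicTailSum r c l := by
    have := dyadicTailSum_nonneg hr c l
    positivity
  rw [div_mul_eq_mul_div, le_div_iff₀ (by linarith)]
  linarith [sum_dyadicTailSum_mul_pow_eq R r hcl]

lemma mul_add_sum_pow_mul_sub (R : ℝ) (r : ℕ → ℝ) {c l : ℕ} (hcl : c ≤ l) :
    R * (R ^ l * r l + ∑ j ∈ Finset.Ico c l, R ^ j * (r j - r (j + 1))) =
      (R - 1) * ∑ i ∈ Finset.Icc c l, R ^ i * r i + R ^ c * r c := by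
  induction hcl using Nat.decreasingInduction with
  | self =>
    simp only [Finset.Ico_self, Finset.sum_empty, add_zero, Finset.Icc_self, Finset.sum_singleton]
    ring
  | of_succ c hcl ih =>
    rw [Finset.sum_eq_sum_Ico_succ_bot hcl, sum_Icc_eq_add_sum_Icc_succ _ hcl.le]
    linear_combination ih

lemma sum_Ico_dyadicTailSum_mul_pow_le {R : ℝ} (hR : 2 < R) {r : ℕ → ℝ}
    (hr : ∀ i, 0 ≤ r i) {c l : ℕ} (hcl : c ≤ l) :
    ∑ k ∈ Finset.Ico c l, dyadicTailSum r k l * R ^ k ≤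
      R ^ 2 / ((R - 1) * (R - 2)) *
        (R ^ l * r l + ∑ j ∈ Finset.Ico c l, R ^ j * (r j - r (j + 1))) := by
  have hP : (R - 1) * ∑ i ∈ Finset.Icc c l, R ^ i * r i ≤
      R * (R ^ l * r l + ∑ j ∈ Finset.Ico c l, R ^ j * (r j - r (j + 1))) := by
    rw [mul_add_sum_pow_mul_sub R r hcl]
    have : 0 ≤ R ^ c * r c := mul_nonneg (pow_nonneg (by linarith) c) (hr c)
    linarith
  calc ∑ k ∈ Finset.Ico c l, dyadicTailSum r k l * R ^ k
      ≤ ∑ k ∈ Finset.Icc c l, dyadicTailSum r k l * R ^ k :=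
        Finset.sum_le_sum_of_subset_of_nonneg Finset.Ico_subset_Icc_self fun k _ _ =>
          mul_nonneg (dyadicTailSum_nonneg hr k l) (pow_nonneg (by linarith) k)
    _ ≤ R / (R - 2) * ∑ i ∈ Finset.Icc c l, R ^ i * r i := sum_dyadicTailSum_mul_pow_le hR hr hcl
    _ = R / ((R - 1) * (R - 2)) * ((R - 1) * ∑ i ∈ Finset.Icc c l, R ^ i * r i) := by
        field_simp [show R - 1 ≠ 0 by linarith]
    _ ≤ R / ((R - 1) * (R - 2)) *
          (R * (R ^ l * r l + ∑ j ∈ Finset.Ico c l, R ^ j * (r j - r (j + 1)))) := by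
        have : 0 < (R - 1) * (R - 2) := mul_pos (by linarith) (by linarith)
        gcongr
    _ = _ := by ring

lemma ofReal_mul_sub_le_setLIntegral_Ioc {f : ℝ → ℝ≥0∞} {β a b : ℝ} (hab : a ≤ b)
    (hf : ∀ ε ∈ Set.Ioo a b, ENNReal.ofReal β ≤ f ε) :
    ENNReal.ofReal (β * (b - a)) ≤ ∫⁻ ε in Set.Ioc a b, f ε :=
  calc ENNReal.ofReal (β * (b - a))
      = ∫⁻ _ in Set.Ioo a b, ENNReal.ofReal β := by
        rw [setLIntegral_const, Real.volume_Ioo, ENNReal.ofReal_mul' (sub_nonneg.mpr hab)]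
    _ ≤ ∫⁻ ε in Set.Ioo a b, f ε := setLIntegral_mono' measurableSet_Ioo hf
    _ ≤ ∫⁻ ε in Set.Ioc a b, f ε := lintegral_mono_set Set.Ioo_subset_Ioc_self

lemma ofReal_add_sum_le_setLIntegral_Ioc {f : ℝ → ℝ≥0∞} {r b : ℕ → ℝ} (hr : Antitone r)
    {c l : ℕ} (hcl : c ≤ l) (hrl : 0 ≤ r l)
    (hf : ∀ k, ∀ ε ∈ Set.Ioo 0 (r k), ENNReal.ofReal (b k) ≤ f ε) :
    ENNReal.ofReal (b l * r l + ∑ j ∈ Finset.Ico c l, b j * (r j - r (j + 1))) ≤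
      ∫⁻ ε in Set.Ioc 0 (r c), f ε := by
  induction hcl using Nat.decreasingInduction with
  | self => simpa using ofReal_mul_sub_le_setLIntegral_Ioc hrl (hf l)
  | of_succ c hcl ih =>
    have hr0 : 0 ≤ r (c + 1) := hrl.trans (hr hcl)
    have hrc : r (c + 1) ≤ r c := hr c.le_succ
    rw [← Set.Ioc_union_Ioc_eq_Ioc hr0 hrc,
      lintegral_union measurableSet_Ioc (Set.Ioc_disjoint_Ioc_of_le le_rfl),
      Finset.sum_eq_sum_Ico_succ_bot hcl, add_left_comm, add_comm (b c * _)]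
    exact ENNReal.ofReal_add_le.trans <| add_le_add ih <|
      ofReal_mul_sub_le_setLIntegral_Ioc hrc fun ε hε => hf c ε ⟨hr0.trans_lt hε.1, hε.2⟩

lemma IsYoungFunction.le_mul_apply_one {φ : ℝ → ℝ} (hφ : IsYoungFunction φ) {t : ℝ}
    (ht0 : 0 ≤ t) (ht1 : t ≤ 1) : φ t ≤ t * φ 1 := by
  have := hφ.2.1.2 (Set.mem_Ici.mpr le_rfl) (Set.mem_Ici.mpr zero_le_one) (sub_nonneg.mpr ht1) ht0
    (sub_add_cancel 1 t)
  simpa [hφ.2.2.1] using this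

lemma IsYoungFunction.one_le_of_one_le_apply {φ : ℝ → ℝ} (hφ : IsYoungFunction φ)
    (hφ1 : φ 1 = 1) {t : ℝ} (ht0 : 0 ≤ t) (ht : 1 ≤ φ t) : 1 ≤ t := by
  by_contra! ht1
  have := hφ.le_mul_apply_one ht0 ht1.le
  rw [hφ1, mul_one] at this
  linarith

lemma ofReal_le_yinv {φ : ℝ → ℝ} {y : ℝ≥0∞} {b : ℝ}
    (h : ∀ t, 0 ≤ t → y ≤ ENNReal.ofReal (φ t) → b ≤ t) : ENNReal.ofReal b ≤ yinv φ y :=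
  le_sInf fun _ ⟨t, ht0, hx, hyt⟩ => hx ▸ ENNReal.ofReal_le_ofReal (h t ht0 hyt)

lemma closedBall_diam_univ_eq_univ {T : Type*} [MetricSpace T] [CompactSpace T] (x : T) :
    Metric.closedBall x (Metric.diam (Set.univ : Set T)) = Set.univ :=
  Set.eq_univ_of_forall fun y => Metric.mem_closedBall.mpr <|
    Metric.dist_le_diam_of_mem Metric.isBounded_of_compactSpace (Set.mem_univ y) (Set.mem_univ x)

section

variable {T : Type} [MetricSpace T] [MeasurableSpace T] {m : Measure T} {φ : ℝ → ℝ} {R : ℝ}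

lemma radl_eq_dyadicTailSum (k l : ℕ) (x : T) :
    radl m φ R k l x = dyadicTailSum (fun i => rad m φ R i x) k l := rfl

lemma rad_nonneg (k : ℕ) (x : T) : 0 ≤ rad m φ R k x := by
  cases k with
  | zero => exact Metric.diam_nonneg
  | succ k => exact Real.sInf_nonneg fun ε hε => hε.1

lemma rad_succ_le {k : ℕ} {x : T} {ε : ℝ} (hε : 0 ≤ ε)
    (hball : 1 / m (Metric.closedBall x ε) ≤ ENNReal.ofReal (φ (R ^ (k + 1)))) :
    rad m φ R (k + 1) x ≤ ε :=
  csInf_le ⟨0, fun _ h => h.1⟩ ⟨hε, hball⟩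

lemma one_div_measure_closedBall_diam_le [CompactSpace T] [IsProbabilityMeasure m]
    (hφ : IsYoungFunction φ) (hφ1 : φ 1 = 1) (hR : 1 ≤ R) (k : ℕ) (x : T) :
    1 / m (Metric.closedBall x (Metric.diam (Set.univ : Set T))) ≤ ENNReal.ofReal (φ (R ^ k)) := by
  rw [closedBall_diam_univ_eq_univ, measure_univ, div_one, ← ENNReal.ofReal_one, ← hφ1]
  exact ENNReal.ofReal_le_ofReal <|
    hφ.1 (Set.mem_Ici.mpr zero_le_one) (Set.mem_Ici.mpr (by positivity)) (one_le_pow₀ hR)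

lemma antitone_rad [CompactSpace T] [IsProbabilityMeasure m] (hφ : IsYoungFunction φ)
    (hφ1 : φ 1 = 1) (hR : 1 ≤ R) (x : T) : Antitone fun k => rad m φ R k x := by
  have hdiam := one_div_measure_closedBall_diam_le hφ hφ1 hR (m := m)
  refine antitone_nat_of_succ_le fun k => ?_
  cases k with
  | zero => exact rad_succ_le Metric.diam_nonneg (hdiam 1 x)
  | succ k =>
    refine le_csInf ⟨_, Metric.diam_nonneg, hdiam (k + 1) x⟩ fun ε hε =>
      rad_succ_le hε.1 (hε.2.trans (ENNReal.ofReal_le_ofReal ?_))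
    exact hφ.1 (Set.mem_Ici.mpr (by positivity)) (Set.mem_Ici.mpr (by positivity))
      (pow_le_pow_right₀ hR k.succ.le_succ)

lemma ofReal_pow_le_yinv_of_lt_rad [IsProbabilityMeasure m] (hφ : IsYoungFunction φ)
    (hφ1 : φ 1 = 1) {k : ℕ} {x : T} {ε : ℝ} (hε : ε ∈ Set.Ioo 0 (rad m φ R k x)) :
    ENNReal.ofReal (R ^ k) ≤ yinv φ (1 / m (Metric.closedBall x ε)) := by
  refine ofReal_le_yinv fun t ht0 hyt => ?_
  cases k with
  | zero =>
    have hy : 1 ≤ 1 / m (Metric.closedBall x ε) := by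
      rw [one_div]
      exact ENNReal.one_le_inv.mpr prob_le_one
    exact (pow_zero R).trans_le <|
      hφ.one_le_of_one_le_apply hφ1 ht0 (ENNReal.one_le_ofReal.mp (hy.trans hyt))
  | succ k =>
    by_contra! htR
    refine (rad_succ_le hε.1.le (hyt.trans (ENNReal.ofReal_le_ofReal ?_))).not_gt hε.2
    exact hφ.1 (Set.mem_Ici.mpr ht0) (Set.mem_Ici.mpr (ht0.trans htR.le)) htR.le

end

theorem statement16_general (T : Type) [MetricSpace T] [CompactSpace T]
    [MeasurableSpace T]
    (m : Measure T) (hm : IsProbabilityMeasure m)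
    (φ : ℝ → ℝ) (hφ : IsYoungFunction φ) (hφ1 : φ 1 = 1)
    (R : ℝ) (hR : 2 < R) :
    ∀ c l : ℕ, c < l → ∀ x : T,
      ENNReal.ofReal (∑ k ∈ Finset.Ico c l, radl m φ R k l x * R ^ k) ≤
        ENNReal.ofReal (R ^ 2 / ((R - 1) * (R - 2))) *
          ∫⁻ ε in Set.Ioc (0 : ℝ) (rad m φ R c x),
            yinv φ (1 / m (Metric.closedBall x ε)) := by
  intro c l hcl x
  simp only [radl_eq_dyadicTailSum]
  set r : ℕ → ℝ := fun i => rad m φ R i x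
  have hr0 (i : ℕ) : 0 ≤ r i := rad_nonneg i x
  have hlower := ofReal_add_sum_le_setLIntegral_Ioc (b := fun k => R ^ k)
    (antitone_rad hφ hφ1 (by linarith) x) hcl.le (hr0 l)
    fun k _ hε => ofReal_pow_le_yinv_of_lt_rad hφ hφ1 hε
  have hC : 0 ≤ R ^ 2 / ((R - 1) * (R - 2)) :=
    div_nonneg (sq_nonneg R) (mul_nonneg (by linarith) (by linarith))
  calc ENNReal.ofReal (∑ k ∈ Finset.Ico c l, dyadicTailSum r k l * R ^ k)
      ≤ ENNReal.ofReal (R ^ 2 / ((R - 1) * (R - 2)) *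
          (R ^ l * r l + ∑ j ∈ Finset.Ico c l, R ^ j * (r j - r (j + 1)))) :=
        ENNReal.ofReal_le_ofReal (sum_Ico_dyadicTailSum_mul_pow_le hR hr0 hcl.le)
    _ ≤ _ := by
      rw [ENNReal.ofReal_mul hC]
      exact mul_le_mul_right hlower _

/-- inequality (2.6) of the paper. -/
theorem statement16 (T : Type) [MetricSpace T] [CompactSpace T]
    [MeasurableSpace T] [BorelSpace T]
    (m : Measure T) (hm : IsProbabilityMeasure m)
    (φ : ℝ → ℝ) (hφ : IsYoungFunction φ) (hφ1 : φ 1 = 1)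
    (R : ℝ) (hR : 2 < R) :
    ∀ c l : ℕ, c < l → ∀ x : T,
      ENNReal.ofReal (∑ k ∈ Finset.Ico c l, radl m φ R k l x * R ^ k) ≤
        ENNReal.ofReal (R ^ 2 / ((R - 1) * (R - 2))) *
          ∫⁻ ε in Set.Ioc (0 : ℝ) (rad m φ R c x),
            yinv φ (1 / m (Metric.closedBall x ε)) :=
  statement16_general T m hm φ hφ hφ1 R hR
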